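/- Let b, d > 0 and C_FN, C_FP > 0, and let W₊, W₋ ≥ 0. Define g(α) = 2b·C_FN·cosh(C_FN·α) + 2d·C_FP·cosh(C_FP·α) − C_FN·e^{−C_FN·α}·W₊ − C_FP·e^{−C_FP·α}·W₋. If W₊ > 2b and W₋ > 2d, then g(0) < 0 and g(α) → +∞ as α → +∞; hence by continuity there exists α > 0 with g(α) = 0. -/

import Mathlib

/-!
At `α = 0` every `cosh` and `exp` equals `1`, so `g 0 = C_FN (2b - W₊) + C_FP (2d - W₋) < 0`.
For each class the `cosh` term grows like `e^{Cα}` while the `exp (-Cα)` term decays to `0`,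
so `g → +∞`; the intermediate value theorem on `[0, M]`, with `g M ≥ 0`, yields the root.
-/

open Filter Real Set

lemma Real.tendsto_cosh_atTop : Tendsto cosh atTop atTop :=
  tendsto_atTop_mono (fun x => by rw [cosh_eq]; linarith [exp_pos (-x)])
    (tendsto_exp_atTop.atTop_div_const two_pos)

lemma tendsto_const_mul_cosh_sub_const_mul_exp_neg_atTop {A c : ℝ} (hA : 0 < A) (hc : 0 < c)
    (B : ℝ) : Tendsto (fun α => A * cosh (c * α) - B * exp (-(c * α))) atTop atTop := by
  have hcα : Tendsto (fun α : ℝ => c * α) atTop atTop := tendsto_id.const_mul_atTop hc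
  have hcosh : Tendsto (fun α => A * cosh (c * α)) atTop atTop :=
    (tendsto_cosh_atTop.comp hcα).const_mul_atTop hA
  have hexp : Tendsto (fun α => B * exp (-(c * α))) atTop (nhds 0) := by
    simpa using (tendsto_exp_neg_atTop_nhds_zero.comp hcα).const_mul B
  simpa only [sub_eq_add_neg] using hcosh.atTop_add hexp.neg

lemma exists_gt_eq_zero_of_neg_of_tendsto_atTop {f : ℝ → ℝ} {a : ℝ} (hf : Continuous f)
    (ha : f a < 0) (hlim : Tendsto f atTop atTop) : ∃ x, a < x ∧ f x = 0 := by
  obtain ⟨M, hfM, haM⟩ := ((hlim.eventually_ge_atTop 0).and (eventually_ge_atTop a)).exists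
  obtain ⟨x, hx, hfx⟩ := intermediate_value_Ioc haM hf.continuousOn ⟨ha, hfM⟩
  exact ⟨x, hx.1, hfx⟩

theorem csab_alpha_exists_general
    (b d CFN CFP Wp Wm : ℝ)
    (hb : 0 < b) (hd : 0 < d) (hFN : 0 < CFN) (hFP : 0 < CFP)
    (g : ℝ → ℝ)
    (hg : g = fun α => 2 * b * CFN * Real.cosh (CFN * α)
        + 2 * d * CFP * Real.cosh (CFP * α)
        - CFN * Real.exp (-(CFN * α)) * Wp
        - CFP * Real.exp (-(CFP * α)) * Wm)
    (h1 : Wp > 2 * b) (h2 : Wm > 2 * d) :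
    g 0 < 0 ∧ Filter.Tendsto g Filter.atTop Filter.atTop ∧
    ∃ α : ℝ, 0 < α ∧ g α = 0 := by
  have hg0 : g 0 < 0 := by
    have hval : g 0 = CFN * (2 * b - Wp) + CFP * (2 * d - Wm) := by
      simp only [hg, mul_zero, cosh_zero, mul_one, neg_zero, exp_zero]; ring
    rw [hval]
    linarith [mul_neg_of_pos_of_neg hFN (sub_neg.2 h1), mul_neg_of_pos_of_neg hFP (sub_neg.2 h2)]
  have hlim : Tendsto g atTop atTop := by
    rw [hg]
    have hN := tendsto_const_mul_cosh_sub_const_mul_exp_neg_atTop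
      (by positivity : 0 < 2 * b * CFN) hFN (CFN * Wp)
    have hP := tendsto_const_mul_cosh_sub_const_mul_exp_neg_atTop
      (by positivity : 0 < 2 * d * CFP) hFP (CFP * Wm)
    exact (hN.atTop_add_atTop hP).congr fun α => by ring
  have hcont : Continuous g := by rw [hg]; fun_prop
  exact ⟨hg0, hlim, exists_gt_eq_zero_of_neg_of_tendsto_atTop hcont hg0 hlim⟩

theorem csab_alpha_exists
    (b d CFN CFP Wp Wm : ℝ)
    (hb : 0 < b) (hd : 0 < d) (hFN : 0 < CFN) (hFP : 0 < CFP)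
    (hWp : 0 ≤ Wp) (hWm : 0 ≤ Wm)
    (g : ℝ → ℝ)
    (hg : g = fun α => 2 * b * CFN * Real.cosh (CFN * α)
        + 2 * d * CFP * Real.cosh (CFP * α)
        - CFN * Real.exp (-(CFN * α)) * Wp
        - CFP * Real.exp (-(CFP * α)) * Wm)
    (h1 : Wp > 2 * b) (h2 : Wm > 2 * d) :
    g 0 < 0 ∧ Filter.Tendsto g Filter.atTop Filter.atTop ∧
    ∃ α : ℝ, 0 < α ∧ g α = 0 :=
  csab_alpha_exists_general b d CFN CFP Wp Wm hb hd hFN hFP g hg h1 h2
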